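/- arXiv:2402.09851 — 2 statements merged into one kernel-verified Lean document; each statement's English description precedes it below -/
import Mathlib

section
/- Let M be a matroid on E with circuit-hyperplane S0, and let M⁻ be the relaxation of M obtained by setting rank_{M⁻}(S0) = rank(M) while keeping all other ranks. Then χ(M⁻;λ) = χ(M;λ) + (−1)^{rank(M)−1}(λ − 1). -/
/-! Relaxing `S₀` changes only the `S₀`-summand of `χ`: its corank drops from `1` to `0`, and
since `|S₀| = rank(M)` that summand changes by `(−1)^{rank(M)} (1 − λ)`. -/

open Polynomial

/-- The characteristic polynomial `χ(M;λ) = Σ_{S ⊆ E} (−1)^{|S|} λ^{corank(S)}`. -/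
noncomputable def charPoly {α : Type*} [DecidableEq α] (E : Finset α)
    (rank : Finset α → ℕ) : Polynomial ℤ :=
  ∑ S ∈ E.powerset, (-1 : Polynomial ℤ) ^ S.card * X ^ (rank E - rank S)

theorem charPoly_ite_eq {α : Type*} [DecidableEq α] (E : Finset α) (rank : Finset α → ℕ)
    (T : Finset α) (hTE : T ⊆ E) (hTne : T ≠ E) (r : ℕ) :
    charPoly E (fun S => if S = T then r else rank S)
      = charPoly E rank
        + (-1 : Polynomial ℤ) ^ T.card * (X ^ (rank E - r) - X ^ (rank E - rank T)) := by
  have hT : T ∈ E.powerset := Finset.mem_powerset.mpr hTE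
  have hrest : ∑ S ∈ E.powerset.erase T,
      (-1 : Polynomial ℤ) ^ S.card * X ^ (rank E - if S = T then r else rank S)
      = ∑ S ∈ E.powerset.erase T, (-1 : Polynomial ℤ) ^ S.card * X ^ (rank E - rank S) :=
    Finset.sum_congr rfl fun S hS => by rw [if_neg (Finset.ne_of_mem_erase hS)]
  unfold charPoly
  rw [← Finset.sum_erase_add _ _ hT, ← Finset.sum_erase_add _ _ hT]
  beta_reduce
  rw [if_neg hTne.symm, hrest, if_pos rfl]
  ring

theorem stmt_9_general {α : Type*} [DecidableEq α] (E : Finset α) (rank : Finset α → ℕ)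
    (S₀ : Finset α) (hS₀E : S₀ ⊆ E)
    (hrk : rank S₀ + 1 = rank E)
    (hcard : rank S₀ + 1 = S₀.card) :
    charPoly E (fun S => if S = S₀ then rank E else rank S)
      = charPoly E rank + (-1 : Polynomial ℤ) ^ (rank E - 1) * (X - 1) := by
  have hS₀ne : S₀ ≠ E := by
    rintro rfl
    omega
  rw [charPoly_ite_eq E rank S₀ hS₀E hS₀ne, ← hcard, ← hrk, Nat.sub_self,
    Nat.add_sub_cancel_left, Nat.add_sub_cancel]
  ring

/-- If `M⁻` is obtained from `M` by relaxing a circuit-hyperplane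
`S₀`, then `χ(M⁻;λ) = χ(M;λ) + (−1)^{rank(M)−1}(λ − 1)`. -/
theorem stmt_9 {α : Type*} [DecidableEq α] (E : Finset α) (rank : Finset α → ℕ)
    (hle : ∀ S ⊆ E, rank S ≤ S.card)
    (hmono : ∀ S₁ S₂ : Finset α, S₁ ⊆ S₂ → S₂ ⊆ E → rank S₁ ≤ rank S₂)
    (hsub : ∀ S₁ S₂ : Finset α, S₁ ⊆ E → S₂ ⊆ E →
      rank (S₁ ∩ S₂) + rank (S₁ ∪ S₂) ≤ rank S₁ + rank S₂)
    (S₀ : Finset α) (hS₀E : S₀ ⊆ E)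
    (hrk : rank S₀ + 1 = rank E)
    (hcard : rank S₀ + 1 = S₀.card)
    (hup : ∀ e₁ ∈ E \ S₀, rank (insert e₁ S₀) = rank E)
    (hdown : ∀ e₂ ∈ S₀, rank (S₀.erase e₂) = rank S₀) :
    charPoly E (fun S => if S = S₀ then rank E else rank S)
      = charPoly E rank + (-1 : Polynomial ℤ) ^ (rank E - 1) * (X - 1) :=
  stmt_9_general E rank S₀ hS₀E hrk hcard
end

section
/- The relaxation M⁻ of a matroid M at a circuit-hyperplane S0 is a matroid; i.e., rank_{M⁻} satisfies the matroid rank axioms (boundedness by cardinality, monotonicity, and submodularity). -/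
/-!
Raising the rank of `S₀` by one can only break submodularity at a pair `S₁, S₂` whose
intersection or union is `S₀`; comparable pairs are trivial. If `S₁ ∩ S₂ = S₀` with `S₁, S₂`
incomparable, both are proper supersets of the hyperplane `S₀` and so have full rank. If
`S₁ ∪ S₂ = S₀`, both are proper subsets of the circuit `S₀`, hence independent, as is
`S₁ ∩ S₂`, and the inequality becomes `|S₁ ∩ S₂| + |S₀| ≤ |S₁| + |S₂|`.
-/

open Finset

theorem Finset.inter_add_union_of_subset {α β : Type*} [DecidableEq α] [AddCommMagma β]
    (f : Finset α → β) {S₁ S₂ : Finset α} (h : S₁ ⊆ S₂) :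
    f (S₁ ∩ S₂) + f (S₁ ∪ S₂) = f S₁ + f S₂ := by
  rw [inter_eq_left.2 h, union_eq_right.2 h]

namespace Relaxation

variable {α : Type*} [DecidableEq α] (E : Finset α) (rank : Finset α → ℕ) (S₀ : Finset α)

def relaxRank (S : Finset α) : ℕ := if S = S₀ then rank E else rank S

variable {E rank S₀}

theorem rank_eq_card_of_subset
    (hle : ∀ S ⊆ E, rank S ≤ S.card)
    (hsub : ∀ S₁ S₂ : Finset α, S₁ ⊆ E → S₂ ⊆ E →
      rank (S₁ ∩ S₂) + rank (S₁ ∪ S₂) ≤ rank S₁ + rank S₂)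
    {A B : Finset α} (hAE : A ⊆ E) (hA : rank A = A.card) (hBA : B ⊆ A) :
    rank B = B.card := by
  have hB := hle B (hBA.trans hAE)
  have hAB := hle (A \ B) (sdiff_subset.trans hAE)
  have hsplit := hsub B (A \ B) (hBA.trans hAE) (sdiff_subset.trans hAE)
  rw [inter_sdiff_self, union_sdiff_of_subset hBA] at hsplit
  have hcard := card_sdiff_add_card_eq_card hBA
  omega

theorem rank_eq_card_of_ssubset
    (hle : ∀ S ⊆ E, rank S ≤ S.card)
    (hsub : ∀ S₁ S₂ : Finset α, S₁ ⊆ E → S₂ ⊆ E →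
      rank (S₁ ∩ S₂) + rank (S₁ ∪ S₂) ≤ rank S₁ + rank S₂)
    (hS₀E : S₀ ⊆ E) (hcard : rank S₀ + 1 = S₀.card)
    (hdown : ∀ e₂ ∈ S₀, rank (S₀.erase e₂) = rank S₀)
    {A : Finset α} (hA : A ⊂ S₀) : rank A = A.card := by
  obtain ⟨e, he, heA⟩ := exists_of_ssubset hA
  have herase : rank (S₀.erase e) = (S₀.erase e).card := by
    rw [hdown e he, card_erase_of_mem he]
    omega
  exact rank_eq_card_of_subset hle hsub ((erase_subset e S₀).trans hS₀E) herase
    (subset_erase.2 ⟨hA.subset, heA⟩)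

theorem rank_eq_of_ssuperset
    (hmono : ∀ S₁ S₂ : Finset α, S₁ ⊆ S₂ → S₂ ⊆ E → rank S₁ ≤ rank S₂)
    (hup : ∀ e₁ ∈ E \ S₀, rank (insert e₁ S₀) = rank E)
    {T : Finset α} (hT : S₀ ⊂ T) (hTE : T ⊆ E) : rank T = rank E := by
  obtain ⟨e, heT, heS₀⟩ := exists_of_ssubset hT
  have hins := hmono _ _ (insert_subset heT hT.subset) hTE
  rw [hup e (mem_sdiff.2 ⟨hTE heT, heS₀⟩)] at hins
  exact le_antisymm (hmono T E hTE subset_rfl) hins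

theorem rank_le_relaxRank (hrk : rank S₀ + 1 = rank E) (S : Finset α) :
    rank S ≤ relaxRank E rank S₀ S := by
  unfold relaxRank
  split_ifs with h
  · rw [h]; omega
  · rfl

theorem relaxRank_le_rank
    (hmono : ∀ S₁ S₂ : Finset α, S₁ ⊆ S₂ → S₂ ⊆ E → rank S₁ ≤ rank S₂)
    {S : Finset α} (hSE : S ⊆ E) : relaxRank E rank S₀ S ≤ rank E := by
  unfold relaxRank
  split_ifs
  · rfl
  · exact hmono S E hSE subset_rfl

theorem relaxRank_le_card
    (hle : ∀ S ⊆ E, rank S ≤ S.card)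
    (hrk : rank S₀ + 1 = rank E) (hcard : rank S₀ + 1 = S₀.card)
    {S : Finset α} (hSE : S ⊆ E) : relaxRank E rank S₀ S ≤ S.card := by
  unfold relaxRank
  split_ifs with h
  · rw [h]; omega
  · exact hle S hSE

theorem relaxRank_mono
    (hmono : ∀ S₁ S₂ : Finset α, S₁ ⊆ S₂ → S₂ ⊆ E → rank S₁ ≤ rank S₂)
    (hrk : rank S₀ + 1 = rank E)
    (hup : ∀ e₁ ∈ E \ S₀, rank (insert e₁ S₀) = rank E)
    {S₁ S₂ : Finset α} (h12 : S₁ ⊆ S₂) (h₂ : S₂ ⊆ E) :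
    relaxRank E rank S₀ S₁ ≤ relaxRank E rank S₀ S₂ := by
  by_cases h₁ : S₁ = S₀
  · subst h₁
    by_cases h₂₁ : S₂ = S₁
    · rw [h₂₁]
    · rw [relaxRank, relaxRank, if_pos rfl, if_neg h₂₁,
        rank_eq_of_ssuperset hmono hup (h12.ssubset_of_ne (Ne.symm h₂₁)) h₂]
  · calc relaxRank E rank S₀ S₁ = rank S₁ := if_neg h₁
      _ ≤ rank S₂ := hmono S₁ S₂ h12 h₂
      _ ≤ relaxRank E rank S₀ S₂ := rank_le_relaxRank hrk S₂

theorem relaxRank_submodular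
    (hle : ∀ S ⊆ E, rank S ≤ S.card)
    (hmono : ∀ S₁ S₂ : Finset α, S₁ ⊆ S₂ → S₂ ⊆ E → rank S₁ ≤ rank S₂)
    (hsub : ∀ S₁ S₂ : Finset α, S₁ ⊆ E → S₂ ⊆ E →
      rank (S₁ ∩ S₂) + rank (S₁ ∪ S₂) ≤ rank S₁ + rank S₂)
    (hS₀E : S₀ ⊆ E) (hrk : rank S₀ + 1 = rank E) (hcard : rank S₀ + 1 = S₀.card)
    (hup : ∀ e₁ ∈ E \ S₀, rank (insert e₁ S₀) = rank E)
    (hdown : ∀ e₂ ∈ S₀, rank (S₀.erase e₂) = rank S₀)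
    {S₁ S₂ : Finset α} (h₁ : S₁ ⊆ E) (h₂ : S₂ ⊆ E) :
    relaxRank E rank S₀ (S₁ ∩ S₂) + relaxRank E rank S₀ (S₁ ∪ S₂)
      ≤ relaxRank E rank S₀ S₁ + relaxRank E rank S₀ S₂ := by
  set r := relaxRank E rank S₀
  by_cases h12 : S₁ ⊆ S₂
  · exact (inter_add_union_of_subset r h12).le
  by_cases h21 : S₂ ⊆ S₁
  · rw [inter_comm, union_comm, add_comm (r S₁)]
    exact (inter_add_union_of_subset r h21).le
  have hI₁ : S₁ ∩ S₂ ⊂ S₁ := inter_subset_left.ssubset_of_ne (mt inter_eq_left.1 h12)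
  have hI₂ : S₁ ∩ S₂ ⊂ S₂ := inter_subset_right.ssubset_of_ne (mt inter_eq_right.1 h21)
  have hU₁ : S₁ ⊂ S₁ ∪ S₂ := subset_union_left.ssubset_of_ne (mt union_eq_left.1 h21 ∘ Eq.symm)
  have hU₂ : S₂ ⊂ S₁ ∪ S₂ := subset_union_right.ssubset_of_ne (mt union_eq_right.1 h12 ∘ Eq.symm)
  by_cases hI : S₁ ∩ S₂ = S₀
  · rw [hI] at hI₁ hI₂
    have hU : r (S₁ ∪ S₂) ≤ rank E := relaxRank_le_rank hmono (union_subset h₁ h₂)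
    have hr₁ : r S₁ = rank E := (if_neg hI₁.ne').trans (rank_eq_of_ssuperset hmono hup hI₁ h₁)
    have hr₂ : r S₂ = rank E := (if_neg hI₂.ne').trans (rank_eq_of_ssuperset hmono hup hI₂ h₂)
    have hrI : r (S₁ ∩ S₂) = rank E := if_pos hI
    omega
  by_cases hU : S₁ ∪ S₂ = S₀
  · rw [hU] at hU₁ hU₂
    have hindep {A : Finset α} (hA : A ⊂ S₀) : r A = A.card :=
      (if_neg hA.ne).trans (rank_eq_card_of_ssubset hle hsub hS₀E hcard hdown hA)
    have hrU : r (S₁ ∪ S₂) = S₀.card := (if_pos hU).trans (by omega)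
    have hcards := card_inter_add_card_union S₁ S₂
    rw [hU] at hcards
    rw [hrU, hindep hU₁, hindep hU₂, hindep (hI₁.trans hU₁), hcards]
  calc r (S₁ ∩ S₂) + r (S₁ ∪ S₂) = rank (S₁ ∩ S₂) + rank (S₁ ∪ S₂) := by
        rw [show r (S₁ ∩ S₂) = _ from if_neg hI, show r (S₁ ∪ S₂) = _ from if_neg hU]
    _ ≤ rank S₁ + rank S₂ := hsub S₁ S₂ h₁ h₂
    _ ≤ r S₁ + r S₂ := add_le_add (rank_le_relaxRank hrk S₁) (rank_le_relaxRank hrk S₂)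

end Relaxation

/-- The relaxation `M⁻` of a matroid `M` at a circuit-hyperplane
`S₀` (defined by `rank⁻ S = rank S` for `S ≠ S₀` and `rank⁻ S₀ = rank E`) is a
matroid: its rank function is bounded by cardinality, monotone and submodular. -/
theorem stmt_10 {α : Type*} [DecidableEq α] (E : Finset α) (rank : Finset α → ℕ)
    (hle : ∀ S ⊆ E, rank S ≤ S.card)
    (hmono : ∀ S₁ S₂ : Finset α, S₁ ⊆ S₂ → S₂ ⊆ E → rank S₁ ≤ rank S₂)
    (hsub : ∀ S₁ S₂ : Finset α, S₁ ⊆ E → S₂ ⊆ E →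
      rank (S₁ ∩ S₂) + rank (S₁ ∪ S₂) ≤ rank S₁ + rank S₂)
    (S₀ : Finset α) (hS₀E : S₀ ⊆ E)
    (hrk : rank S₀ + 1 = rank E)
    (hcard : rank S₀ + 1 = S₀.card)
    (hup : ∀ e₁ ∈ E \ S₀, rank (insert e₁ S₀) = rank E)
    (hdown : ∀ e₂ ∈ S₀, rank (S₀.erase e₂) = rank S₀) :
    (∀ S ⊆ E, (if S = S₀ then rank E else rank S) ≤ S.card) ∧
    (∀ S₁ S₂ : Finset α, S₁ ⊆ S₂ → S₂ ⊆ E →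
      (if S₁ = S₀ then rank E else rank S₁) ≤ (if S₂ = S₀ then rank E else rank S₂)) ∧
    (∀ S₁ S₂ : Finset α, S₁ ⊆ E → S₂ ⊆ E →
      (if S₁ ∩ S₂ = S₀ then rank E else rank (S₁ ∩ S₂))
          + (if S₁ ∪ S₂ = S₀ then rank E else rank (S₁ ∪ S₂))
        ≤ (if S₁ = S₀ then rank E else rank S₁)
          + (if S₂ = S₀ then rank E else rank S₂)) :=
  ⟨fun _ hS => Relaxation.relaxRank_le_card hle hrk hcard hS,
    fun _ _ h12 h₂ => Relaxation.relaxRank_mono hmono hrk hup h12 h₂,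
    fun _ _ h₁ h₂ =>
      Relaxation.relaxRank_submodular hle hmono hsub hS₀E hrk hcard hup hdown h₁ h₂⟩
end
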